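/- arXiv:math/0610686 — 2 statements merged into one kernel-verified Lean document; each statement's English description precedes it below -/
import Mathlib

section
/- For every r > 0 and δ > 0 there exists N_δ such that for all N > N_δ: if a polynomial ψ(z) = ∑_{j=0}^N α_j √(C(N,j)) z^j satisfies max_{|z|≤r} |ψ(z)| > (1+r²)^{N/2} (1+δ)^{N/2}, then there exists an index j with |α_j| > N. -/
/-!
Each term satisfies `√C(N,j) r^j ≤ (1 + r²)^{N/2}`, since `C(N,j) r^{2j}` is one term of the binomial
expansion of `(1 + r²)^N`. Hence if all `|α_j| ≤ N`, the triangle inequality bounds `|ψ|` on the disk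
by `N (N + 1) (1 + r²)^{N/2}`, and the polynomial factor `N (N + 1)` is eventually dominated by
the exponential `(1 + δ)^{N/2}`.
-/

open Filter Finset

theorem choose_mul_pow_le_one_add_pow (N j : ℕ) {y : ℝ} (hy : 0 ≤ y) :
    (N.choose j : ℝ) * y ^ j ≤ (1 + y) ^ N := by
  rcases le_or_gt j N with hjN | hNj
  · rw [add_comm, add_pow]
    calc (N.choose j : ℝ) * y ^ j = y ^ j * 1 ^ (N - j) * N.choose j := by ring
      _ ≤ ∑ k ∈ range (N + 1), y ^ k * 1 ^ (N - k) * N.choose k :=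
        single_le_sum (f := fun k => y ^ k * 1 ^ (N - k) * (N.choose k : ℝ))
          (fun k _ => by positivity) (mem_range.mpr (Nat.lt_succ_of_le hjN))
  · rw [Nat.choose_eq_zero_of_lt hNj, Nat.cast_zero, zero_mul]
    positivity

theorem sqrt_choose_mul_pow_le (N j : ℕ) {x : ℝ} (hx : 0 ≤ x) :
    √(N.choose j : ℝ) * x ^ j ≤ (1 + x ^ 2) ^ ((N : ℝ) / 2) := by
  rw [Real.rpow_div_two_eq_sqrt _ (by positivity), Real.rpow_natCast,
    ← pow_le_pow_iff_left₀ (by positivity) (by positivity) two_ne_zero]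
  calc (√(N.choose j : ℝ) * x ^ j) ^ 2 = (N.choose j : ℝ) * (x ^ 2) ^ j := by
        rw [mul_pow, Real.sq_sqrt (Nat.cast_nonneg _), ← pow_mul, ← pow_mul, mul_comm j]
    _ ≤ (1 + x ^ 2) ^ N := choose_mul_pow_le_one_add_pow N j (sq_nonneg x)
    _ = (√(1 + x ^ 2) ^ N) ^ 2 := by
        rw [← pow_mul, mul_comm, pow_mul, Real.sq_sqrt (by positivity)]

theorem norm_sum_mul_sqrt_choose_mul_pow_le {N : ℕ} {α : Fin (N + 1) → ℂ} {A r : ℝ} {z : ℂ}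
    (hα : ∀ j, ‖α j‖ ≤ A) (hz : ‖z‖ ≤ r) :
    ‖∑ j : Fin (N + 1), α j * (√(N.choose j : ℝ) : ℂ) * z ^ (j : ℕ)‖ ≤
      (N + 1) * A * (1 + r ^ 2) ^ ((N : ℝ) / 2) := by
  have hr : 0 ≤ r := (norm_nonneg z).trans hz
  have hA : 0 ≤ A := (norm_nonneg _).trans (hα 0)
  have hterm : ∀ j : Fin (N + 1), ‖α j * (√(N.choose j : ℝ) : ℂ) * z ^ (j : ℕ)‖ ≤
      A * (1 + r ^ 2) ^ ((N : ℝ) / 2) := fun j => by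
    rw [norm_mul, norm_mul, Complex.norm_real, Real.norm_of_nonneg (Real.sqrt_nonneg _), norm_pow,
      mul_assoc]
    gcongr
    · exact hα j
    · exact (mul_le_mul_of_nonneg_left (pow_le_pow_left₀ (norm_nonneg z) hz _)
        (Real.sqrt_nonneg _)).trans (sqrt_choose_mul_pow_le N j hr)
  calc _ ≤ ∑ j : Fin (N + 1), ‖α j * (√(N.choose j : ℝ) : ℂ) * z ^ (j : ℕ)‖ := norm_sum_le _ _
    _ ≤ ∑ _j : Fin (N + 1), A * (1 + r ^ 2) ^ ((N : ℝ) / 2) := sum_le_sum fun j _ => hterm j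
    _ = (N + 1) * A * (1 + r ^ 2) ^ ((N : ℝ) / 2) := by
      rw [sum_const, card_univ, Fintype.card_fin, nsmul_eq_mul]
      push_cast
      ring

theorem eventually_mul_succ_le_one_add_rpow_half {δ : ℝ} (hδ : 0 < δ) :
    ∀ᶠ N : ℕ in atTop, ((N : ℝ) + 1) * N ≤ (1 + δ) ^ ((N : ℝ) / 2) := by
  have hb : 1 < √(1 + δ) := by
    rw [Real.lt_sqrt zero_le_one]
    linarith
  filter_upwards [(isLittleO_pow_const_const_pow_of_one_lt (R := ℝ) 2 hb).bound one_half_pos,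
    eventually_ge_atTop 1] with N hN hN1
  rw [Real.rpow_div_two_eq_sqrt _ (by linarith), Real.rpow_natCast]
  rw [norm_pow, norm_pow, Real.norm_natCast, Real.norm_of_nonneg (Real.sqrt_nonneg _)] at hN
  have hN1' : (1 : ℝ) ≤ N := by exact_mod_cast hN1
  nlinarith

theorem large_max_implies_large_coeff_general (r δ : ℝ) (hδ : 0 < δ) :
    ∃ N₀ : ℕ, ∀ N > N₀, ∀ α : Fin (N + 1) → ℂ,
      (∃ z : ℂ, ‖z‖ ≤ r ∧
        (1 + r ^ 2) ^ ((N : ℝ) / 2) * (1 + δ) ^ ((N : ℝ) / 2) <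
          ‖∑ j : Fin (N + 1), α j * (Real.sqrt (N.choose j) : ℂ) * z ^ (j : ℕ)‖) →
      ∃ j : Fin (N + 1), (N : ℝ) < ‖α j‖ := by
  obtain ⟨N₀, hN₀⟩ := eventually_atTop.mp (eventually_mul_succ_le_one_add_rpow_half hδ)
  refine ⟨N₀, fun N hN α ⟨z, hz, hlarge⟩ => ?_⟩
  by_contra! hsmall
  have hbound := norm_sum_mul_sqrt_choose_mul_pow_le hsmall hz
  have hdisk : 0 < (1 + r ^ 2) ^ ((N : ℝ) / 2) := by positivity
  have hpoly := mul_le_mul_of_nonneg_left (hN₀ N hN.le) hdisk.le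
  linarith

theorem large_max_implies_large_coeff (r δ : ℝ) (hr : 0 < r) (hδ : 0 < δ) :
    ∃ N₀ : ℕ, ∀ N > N₀, ∀ α : Fin (N + 1) → ℂ,
      (∃ z : ℂ, ‖z‖ ≤ r ∧
        (1 + r ^ 2) ^ ((N : ℝ) / 2) * (1 + δ) ^ ((N : ℝ) / 2) <
          ‖∑ j : Fin (N + 1), α j * (Real.sqrt (N.choose j) : ℂ) * z ^ (j : ℕ)‖) →
      ∃ j : Fin (N + 1), (N : ℝ) < ‖α j‖ :=
  large_max_implies_large_coeff_general r δ hδ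
end

section
/- For every r > 0 there exist c_r > 0 and N_r such that for all N > N_r, the probability that the Gaussian random SU(2) polynomial ψ_{α,N}(z) = ∑_{j=0}^N α_j √(C(N,j)) z^j has no zeros in the disk B(0,r) is at least e^{−c_r N²}. -/
/-!
Put `α₀` in the closed ball `B(1, 1/2)` and every other coefficient in `B(0, δ)` with
`δ = 1 / (4 (1 + r)^N)`. Since `√C(N,j) ≤ C(N,j)`, on `|z| ≤ r` the non-constant part of `ψ` is at
most `δ (1 + r)^N = 1/4 < |α₀|`, so `ψ` has no zero there. The coefficients are independent, and
the Gaussian mass of `B(0, δ)` is at least `e⁻¹ δ²`, so this box has probability at least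
`p (e⁻¹ δ²)^N ≥ p q^(N²) ≥ (p q)^(N²)` with `p = e^(-9/4) / 4` and `q = e⁻¹ / (16 (1 + r)²)`.
-/

open MeasureTheory

/-- The standard complex Gaussian measure on ℂ, with density `(1/π) e^{-|w|²}`. -/
noncomputable def stdGaussianC : Measure ℂ :=
  volume.withDensity fun w => ENNReal.ofReal (Real.exp (-(‖w‖) ^ 2) / Real.pi)

open Metric

lemma Fin.sum_ne_zero_of_sum_norm_succ_lt {E : Type*} [NormedAddCommGroup E] {n : ℕ}
    (a : Fin (n + 1) → E) (h : ∑ i : Fin n, ‖a i.succ‖ < ‖a 0‖) : ∑ i, a i ≠ 0 := by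
  intro hsum
  rw [Fin.sum_univ_succ, add_eq_zero_iff_eq_neg] at hsum
  have := (norm_sum_le _ _).trans_lt h
  rw [hsum, norm_neg] at this
  exact this.false

lemma sum_sqrt_choose_mul_pow_le (N : ℕ) {x : ℝ} (hx : 0 ≤ x) :
    ∑ j : Fin (N + 1), √(N.choose j) * x ^ (j : ℕ) ≤ (1 + x) ^ N := by
  rw [Fin.sum_univ_eq_sum_range (fun j => √(N.choose j) * x ^ j), add_comm 1 x, add_pow x 1 N]
  refine Finset.sum_le_sum fun j _ => ?_
  have sqrt_le : √(N.choose j : ℝ) ≤ N.choose j := by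
    rcases Nat.eq_zero_or_pos (N.choose j) with h | h
    · simp [h]
    · exact Real.sqrt_le_self_iff.mpr (Or.inr (by exact_mod_cast h))
  rw [one_pow, mul_one, mul_comm]
  gcongr

lemma exp_log_mul_mul_sq_le {p q : ℝ} (hp0 : 0 < p) (hp1 : p ≤ 1) (hq0 : 0 < q) {N : ℕ}
    (hN : N ≠ 0) : Real.exp (Real.log (p * q) * (N : ℝ) ^ 2) ≤ p * (q ^ N) ^ N := by
  have hexp : Real.exp (Real.log (p * q) * (N : ℝ) ^ 2) = (p * q) ^ (N * N) := by
    rw [← Real.exp_log (by positivity : 0 < p * q), ← Real.exp_nat_mul, Real.log_exp]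
    push_cast
    ring_nf
  rw [hexp, mul_pow, ← pow_mul]
  gcongr
  exact pow_le_of_le_one hp0.le hp1 (by positivity)

instance : SigmaFinite stdGaussianC := by
  unfold stdGaussianC; infer_instance

lemma stdGaussianC_closedBall_ge (a : ℂ) {ρ : ℝ} (hρ : 0 ≤ ρ) :
    ENNReal.ofReal (Real.exp (-(‖a‖ + ρ) ^ 2) * ρ ^ 2) ≤ stdGaussianC (closedBall a ρ) := by
  rw [stdGaussianC, withDensity_apply _ measurableSet_closedBall]
  have density_ge : ∀ w ∈ closedBall a ρ, ENNReal.ofReal (Real.exp (-(‖a‖ + ρ) ^ 2) / Real.pi) ≤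
      ENNReal.ofReal (Real.exp (-‖w‖ ^ 2) / Real.pi) := fun w hw => by
    have hw : ‖w‖ ≤ ‖a‖ + ρ := by
      rw [mem_closedBall, dist_eq_norm] at hw
      linarith [norm_le_norm_add_norm_sub' w a]
    gcongr
  calc ENNReal.ofReal (Real.exp (-(‖a‖ + ρ) ^ 2) * ρ ^ 2)
      = ∫⁻ _ in closedBall a ρ, ENNReal.ofReal (Real.exp (-(‖a‖ + ρ) ^ 2) / Real.pi) := by
        rw [setLIntegral_const, Complex.volume_closedBall, ← ENNReal.ofReal_coe_nnreal,
          NNReal.coe_real_pi, ← ENNReal.ofReal_pow hρ, ← ENNReal.ofReal_mul (by positivity),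
          ← ENNReal.ofReal_mul (by positivity)]
        congr 1
        field_simp
    _ ≤ _ := setLIntegral_mono' measurableSet_closedBall density_ge

lemma exists_radius_measure_closedBall_ge {r : ℝ} (hr : 0 ≤ r) {N : ℕ} (hN : N ≠ 0) :
    ∃ δ, 0 ≤ δ ∧ δ * (1 + r) ^ N < 1 / 2 ∧
      ENNReal.ofReal ((Real.exp (-1) / 16 * ((1 + r) ^ 2)⁻¹) ^ N) ≤
        stdGaussianC (closedBall 0 δ) := by
  have hrN : 1 ≤ (1 + r) ^ N := one_le_pow₀ (by linarith)
  refine ⟨1 / (4 * (1 + r) ^ N), by positivity, by field_simp; norm_num, ?_⟩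
  refine le_trans (ENNReal.ofReal_le_ofReal ?_) (stdGaussianC_closedBall_ge 0 (by positivity))
  have exp_le : Real.exp (-1) ≤ Real.exp (-(‖(0 : ℂ)‖ + 1 / (4 * (1 + r) ^ N)) ^ 2) := by
    rw [norm_zero, zero_add, Real.exp_le_exp, neg_le_neg_iff, div_pow]
    exact div_le_one_of_le₀ (by nlinarith) (by positivity)
  calc (Real.exp (-1) / 16 * ((1 + r) ^ 2)⁻¹) ^ N
      ≤ Real.exp (-1) / 16 * ((1 + r) ^ 2)⁻¹ ^ N := by
        rw [mul_pow]
        gcongr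
        exact pow_le_of_le_one (by positivity)
          (by linarith [Real.exp_le_one_iff.mpr (by norm_num : (-1 : ℝ) ≤ 0)]) hN
    _ = Real.exp (-1) * (1 / (4 * (1 + r) ^ N)) ^ 2 := by
        rw [inv_pow, ← pow_mul, mul_comm 2 N, pow_mul]
        field_simp
        ring
    _ ≤ _ := by gcongr

def coeffBox (N : ℕ) (δ : ℝ) : Set (Fin (N + 1) → ℂ) :=
  Set.univ.pi (Fin.cons (closedBall 1 (1 / 2)) fun _ => closedBall 0 δ)

lemma measure_coeffBox (N : ℕ) (δ : ℝ) :
    (Measure.pi fun _ : Fin (N + 1) => stdGaussianC) (coeffBox N δ) =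
      stdGaussianC (closedBall 1 (1 / 2)) * stdGaussianC (closedBall 0 δ) ^ N := by
  simp [coeffBox, Measure.pi_pi, Fin.prod_univ_succ]

lemma sum_ne_zero_of_mem_coeffBox {N : ℕ} {δ r : ℝ} (hδ0 : 0 ≤ δ) (hδ : δ * (1 + r) ^ N < 1 / 2)
    {α : Fin (N + 1) → ℂ} (hα : α ∈ coeffBox N δ) {z : ℂ} (hz : ‖z‖ ≤ r) :
    ∑ j : Fin (N + 1), α j * (√(N.choose j) : ℂ) * z ^ (j : ℕ) ≠ 0 := by
  have head_ge : 1 / 2 ≤ ‖α 0‖ := by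
    have := mem_closedBall.mp (by simpa using hα 0 trivial)
    rw [dist_eq_norm] at this
    linarith [norm_sub_norm_le (1 : ℂ) (α 0), norm_sub_rev (α 0) 1, norm_one (α := ℂ)]
  have coeff_le : ∀ j : Fin N, ‖α j.succ‖ ≤ δ := fun j => by
    simpa using hα j.succ trivial
  have hr : 0 ≤ r := (norm_nonneg z).trans hz
  refine Fin.sum_ne_zero_of_sum_norm_succ_lt _ ?_
  calc ∑ j : Fin N, ‖α j.succ * (√(N.choose j.succ) : ℂ) * z ^ (j.succ : ℕ)‖
      ≤ ∑ j : Fin N, δ * (√(N.choose j.succ) * r ^ (j.succ : ℕ)) := Finset.sum_le_sum fun j _ => by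
        rw [norm_mul, norm_mul, norm_pow, Complex.norm_real, Real.norm_of_nonneg (by positivity),
          mul_assoc]
        gcongr
        exact coeff_le j
    _ ≤ δ * ∑ j : Fin (N + 1), √(N.choose j) * r ^ (j : ℕ) := by
        rw [← Finset.mul_sum, Fin.sum_univ_succ]
        gcongr
        exact le_add_of_nonneg_left (by positivity)
    _ ≤ δ * (1 + r) ^ N := by gcongr; exact sum_sqrt_choose_mul_pow_le N hr
    _ < 1 / 2 := hδ
    _ ≤ ‖α 0 * (√(N.choose (0 : Fin (N + 1))) : ℂ) * z ^ ((0 : Fin (N + 1)) : ℕ)‖ := by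
        simpa using head_ge

theorem hole_probability_lower_bound (r : ℝ) (hr : 0 < r) :
    ∃ c > (0 : ℝ), ∃ N₀ : ℕ, ∀ N > N₀,
      ENNReal.ofReal (Real.exp (-c * (N : ℝ) ^ 2)) ≤
      (Measure.pi fun _ : Fin (N + 1) => stdGaussianC)
        {α : Fin (N + 1) → ℂ | ∀ z ∈ Metric.closedBall (0 : ℂ) r,
          (∑ j : Fin (N + 1), α j * (Real.sqrt (N.choose j) : ℂ) * z ^ (j : ℕ)) ≠ 0} := by
  set p : ℝ := Real.exp (-(1 + 1 / 2) ^ 2) * (1 / 2) ^ 2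
  set q : ℝ := Real.exp (-1) / 16 * ((1 + r) ^ 2)⁻¹
  have hp : 0 < p ∧ p < 1 := ⟨by positivity, mul_lt_one_of_nonneg_of_lt_one_right
    (Real.exp_le_one_iff.mpr (neg_nonpos.mpr (sq_nonneg _))) (by norm_num) (by norm_num)⟩
  have hq : 0 < q ∧ q ≤ 1 := ⟨by positivity, mul_le_one₀
    (div_le_one_of_le₀ ((Real.exp_le_one_iff.mpr (by norm_num)).trans (by norm_num)) (by norm_num))
    (by positivity) (inv_le_one_of_one_le₀ (one_le_pow₀ (by linarith)))⟩
  refine ⟨-Real.log (p * q), neg_pos.mpr (Real.log_neg (by positivity)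
    (mul_lt_one_of_nonneg_of_lt_one_left hp.1.le hp.2 hq.2)), 0, fun N hN => ?_⟩
  obtain ⟨δ, hδ0, hδr, hball⟩ := exists_radius_measure_closedBall_ge hr.le hN.ne'
  calc ENNReal.ofReal (Real.exp (-(-Real.log (p * q)) * (N : ℝ) ^ 2))
      ≤ ENNReal.ofReal p * ENNReal.ofReal (q ^ N) ^ N := by
        rw [neg_neg, ← ENNReal.ofReal_pow (by positivity), ← ENNReal.ofReal_mul hp.1.le]
        exact ENNReal.ofReal_le_ofReal (exp_log_mul_mul_sq_le hp.1 hp.2.le hq.1 hN.ne')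
    _ ≤ stdGaussianC (closedBall 1 (1 / 2)) * stdGaussianC (closedBall 0 δ) ^ N := by
        gcongr
        simpa [p] using stdGaussianC_closedBall_ge (1 : ℂ) (by norm_num : (0 : ℝ) ≤ 1 / 2)
    _ = _ := (measure_coeffBox N δ).symm
    _ ≤ _ := by
        refine measure_mono fun α hα z hz => ?_
        exact sum_ne_zero_of_mem_coeffBox hδ0 hδr hα (by simpa using hz)
end
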